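/- arXiv:1909.00097 — 5 statements merged into one kernel-verified Lean document; each statement's English description precedes it below -/
import Mathlib

section
/- Soundness of the Seq rule: for all statements c1, c2 and assertions P, Q, R, Rb, Rc, Rr, if ⊨ {P} c1 {Q, Rb, Rc, Rr} and ⊨ {Q} c2 {R, Rb, Rc, Rr} hold, then ⊨ {P} c1 ; c2 {R, Rb, Rc, Rr} holds. -/
/-- Outcomes of executing a statement. -/
inductive Outcome where
  | normal
  | brk
  | con
  | ret
  deriving DecidableEq

/-- Statements of the deeply embedded language. Expressions are represented
by their evaluation functions `(Var → ℤ) → ℤ`. -/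
inductive Stmt (Var : Type) where
  | skip
  | assign (x : Var) (e : (Var → ℤ) → ℤ)
  | seq (c1 c2 : Stmt Var)
  | break_
  | continue_
  | return_
  | ifte (e : (Var → ℤ) → ℤ) (c1 c2 : Stmt Var)
  | loop (c1 c2 : Stmt Var)

/-- State update `σ[x ↦ v]`. -/
def upd {Var : Type} [DecidableEq Var] (σ : Var → ℤ) (x : Var) (v : ℤ) : Var → ℤ :=
  fun y => if y = x then v else σ y

/-- Big-step semantics `(c, σ) ⇓ (o, σ')`. -/
inductive BigStep {Var : Type} [DecidableEq Var] :
    Stmt Var → (Var → ℤ) → Outcome → (Var → ℤ) → Prop where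
  | skip {σ} : BigStep .skip σ .normal σ
  | assign {x e σ} : BigStep (.assign x e) σ .normal (upd σ x (e σ))
  | seq_normal {c1 c2 σ σ1 o σ2} :
      BigStep c1 σ .normal σ1 → BigStep c2 σ1 o σ2 → BigStep (.seq c1 c2) σ o σ2
  | seq_abort {c1 c2 σ o σ1} :
      BigStep c1 σ o σ1 → o ≠ .normal → BigStep (.seq c1 c2) σ o σ1
  | break_ {σ} : BigStep .break_ σ .brk σ
  | continue_ {σ} : BigStep .continue_ σ .con σ
  | return_ {σ} : BigStep .return_ σ .ret σ
  | if_true {e c1 c2 σ o σ'} :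
      e σ ≠ 0 → BigStep c1 σ o σ' → BigStep (.ifte e c1 c2) σ o σ'
  | if_false {e c1 c2 σ o σ'} :
      e σ = 0 → BigStep c2 σ o σ' → BigStep (.ifte e c1 c2) σ o σ'
  | loop_brk {c1 c2 σ σ'} :
      BigStep c1 σ .brk σ' → BigStep (.loop c1 c2) σ .normal σ'
  | loop_ret {c1 c2 σ σ'} :
      BigStep c1 σ .ret σ' → BigStep (.loop c1 c2) σ .ret σ'
  | loop_incr_brk_of_normal {c1 c2 σ σ' σ''} :
      BigStep c1 σ .normal σ' →
      BigStep c2 σ' .brk σ'' → BigStep (.loop c1 c2) σ .normal σ''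
  | loop_incr_brk_of_con {c1 c2 σ σ' σ''} :
      BigStep c1 σ .con σ' →
      BigStep c2 σ' .brk σ'' → BigStep (.loop c1 c2) σ .normal σ''
  | loop_incr_ret_of_normal {c1 c2 σ σ' σ''} :
      BigStep c1 σ .normal σ' →
      BigStep c2 σ' .ret σ'' → BigStep (.loop c1 c2) σ .ret σ''
  | loop_incr_ret_of_con {c1 c2 σ σ' σ''} :
      BigStep c1 σ .con σ' →
      BigStep c2 σ' .ret σ'' → BigStep (.loop c1 c2) σ .ret σ''
  | loop_step_of_normal {c1 c2 σ σ' σ'' o σ'''} :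
      BigStep c1 σ .normal σ' →
      BigStep c2 σ' .normal σ'' → BigStep (.loop c1 c2) σ'' o σ''' →
      BigStep (.loop c1 c2) σ o σ'''
  | loop_step_of_con {c1 c2 σ σ' σ'' o σ'''} :
      BigStep c1 σ .con σ' →
      BigStep c2 σ' .normal σ'' → BigStep (.loop c1 c2) σ'' o σ''' →
      BigStep (.loop c1 c2) σ o σ'''

/-- Assertions are predicates on states. -/
def Assn (Var : Type) : Type := (Var → ℤ) → Prop

/-- Entailment `P ⊨ Q`. -/
def Entails {Var : Type} (P Q : Assn Var) : Prop := ∀ σ, P σ → Q σ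

/-- The Hoare quadruple `⊨ {P} c {Q, Qb, Qc, Qr}`. -/
def Valid {Var : Type} [DecidableEq Var]
    (P : Assn Var) (c : Stmt Var) (Q Qb Qc Qr : Assn Var) : Prop :=
  ∀ σ o σ', P σ → BigStep c σ o σ' →
    (o = .normal → Q σ') ∧ (o = .brk → Qb σ') ∧ (o = .con → Qc σ') ∧ (o = .ret → Qr σ')

/-- Strongest postcondition of an assignment:
`sp(P, x, e) = λ σ'. ∃ σ, P σ ∧ σ' = σ[x ↦ ⟦e⟧σ]`. -/
def sp {Var : Type} [DecidableEq Var] (P : Assn Var) (x : Var) (e : (Var → ℤ) → ℤ) : Assn Var :=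
  fun σ' => ∃ σ, P σ ∧ σ' = upd σ x (e σ)

/-- Soundness of the Seq rule. -/
theorem seq_sound {Var : Type} [DecidableEq Var] (c1 c2 : Stmt Var)
    (P Q R Rb Rc Rr : Assn Var)
    (h1 : Valid P c1 Q Rb Rc Rr) (h2 : Valid Q c2 R Rb Rc Rr) :
    Valid P (Stmt.seq c1 c2) R Rb Rc Rr := by
  intro σ o σ' hP h
  cases h with
  | seq_normal ha hb =>
    exact h2 _ _ _ ((h1 _ _ _ hP ha).1 rfl) hb
  | seq_abort ha hne =>
    obtain ⟨hn, hb, hc, hr⟩ := h1 _ _ _ hP ha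
    exact ⟨fun h => absurd h hne, hb, hc, hr⟩
end

section
/- Soundness of the Loop rule with a loop invariant I and a continue invariant I': for all statements c, c' and assertions P, I, I', Q, Qb, Qc, Qr, if P ⊨ I, ⊨ {I} c {I', Q, I', Qr} holds (loop-body triple: normal postcondition I', break postcondition Q, continue postcondition I', return postcondition Qr), and ⊨ {I'} c' {I, Q, λ σ. False, Qr} holds (increment triple: normal postcondition I, break postcondition Q, continue postcondition False, return postcondition Qr), then ⊨ {P} loop c c' {Q, Qb, Qc, Qr} holds. -/
/-- Soundness of the Loop rule with loop invariant `I` and continue invariant `I'`. -/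
theorem loop_sound {Var : Type} [DecidableEq Var] (c c' : Stmt Var)
    (P I I' Q Qb Qc Qr : Assn Var)
    (hPI : Entails P I)
    (hbody : Valid I c I' Q I' Qr)
    (hincr : Valid I' c' I Q (fun _ => False) Qr) :
    Valid P (Stmt.loop c c') Q Qb Qc Qr := by
  intro σ o σ' hP hstep
  suffices h : ∀ d σ o σ', BigStep d σ o σ' → d = Stmt.loop c c' → I σ →
      (o = .normal → Q σ') ∧ (o = .brk → Qb σ') ∧ (o = .con → Qc σ') ∧ (o = .ret → Qr σ') by
    exact h _ _ _ _ hstep rfl (hPI σ hP)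
  intro d σ0 o0 σ0' hstep
  induction hstep with
  | loop_brk h1 =>
    rintro ⟨rfl, rfl⟩ hI
    exact ⟨fun _ => ((hbody _ _ _ hI h1).2.1 rfl), by rintro ⟨⟩, by rintro ⟨⟩, by rintro ⟨⟩⟩
  | loop_ret h1 =>
    rintro ⟨rfl, rfl⟩ hI
    exact ⟨by rintro ⟨⟩, by rintro ⟨⟩, by rintro ⟨⟩, fun _ => ((hbody _ _ _ hI h1).2.2.2 rfl)⟩
  | loop_incr_brk_of_normal h1 h2 =>
    rintro ⟨rfl, rfl⟩ hI
    have hI' := (hbody _ _ _ hI h1).1 rfl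
    exact ⟨fun _ => ((hincr _ _ _ hI' h2).2.1 rfl), by rintro ⟨⟩, by rintro ⟨⟩, by rintro ⟨⟩⟩
  | loop_incr_brk_of_con h1 h2 =>
    rintro ⟨rfl, rfl⟩ hI
    have hI' := (hbody _ _ _ hI h1).2.2.1 rfl
    exact ⟨fun _ => ((hincr _ _ _ hI' h2).2.1 rfl), by rintro ⟨⟩, by rintro ⟨⟩, by rintro ⟨⟩⟩
  | loop_incr_ret_of_normal h1 h2 =>
    rintro ⟨rfl, rfl⟩ hI
    have hI' := (hbody _ _ _ hI h1).1 rfl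
    exact ⟨by rintro ⟨⟩, by rintro ⟨⟩, by rintro ⟨⟩, fun _ => ((hincr _ _ _ hI' h2).2.2.2 rfl)⟩
  | loop_incr_ret_of_con h1 h2 =>
    rintro ⟨rfl, rfl⟩ hI
    have hI' := (hbody _ _ _ hI h1).2.2.1 rfl
    exact ⟨by rintro ⟨⟩, by rintro ⟨⟩, by rintro ⟨⟩, fun _ => ((hincr _ _ _ hI' h2).2.2.2 rfl)⟩
  | loop_step_of_normal h1 h2 _ _ _ ih =>
    intro heq hI
    injection heq with e1 e2
    subst e1; subst e2
    have hI' := (hbody _ _ _ hI h1).1 rfl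
    exact ih rfl ((hincr _ _ _ hI' h2).1 rfl)
  | loop_step_of_con h1 h2 _ _ _ ih =>
    intro heq hI
    injection heq with e1 e2
    subst e1; subst e2
    have hI' := (hbody _ _ _ hI h1).2.2.1 rfl
    exact ih rfl ((hincr _ _ _ hI' h2).1 rfl)
  | _ => intro h; exact absurd h (by simp)
end

section
/- Soundness of the IfSeq rule: for every expression b, statements c1, c2, c3, and assertions P, Q, Qb, Qc, Qr, if ⊨ {P} (if b then c1 else c2) ; c3 {Q, Qb, Qc, Qr} holds, then ⊨ {P} if b then (c1 ; c3) else (c2 ; c3) {Q, Qb, Qc, Qr} holds. -/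
/-- Soundness of the IfSeq rule. -/
theorem ifseq_sound {Var : Type} [DecidableEq Var] (b : (Var → ℤ) → ℤ)
    (c1 c2 c3 : Stmt Var) (P Q Qb Qc Qr : Assn Var)
    (h : Valid P (Stmt.seq (Stmt.ifte b c1 c2) c3) Q Qb Qc Qr) :
    Valid P (Stmt.ifte b (Stmt.seq c1 c3) (Stmt.seq c2 c3)) Q Qb Qc Qr := by
  intro σ o σ' hP hstep
  apply h σ o σ' hP
  cases hstep with
  | if_true hb hs =>
    cases hs with
    | seq_normal h1 h2 => exact .seq_normal (.if_true hb h1) h2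
    | seq_abort h1 hne => exact .seq_abort (.if_true hb h1) hne
  | if_false hb hs =>
    cases hs with
    | seq_normal h1 h2 => exact .seq_normal (.if_false hb h1) h2
    | seq_abort h1 hne => exact .seq_abort (.if_false hb h1) hne
end

section
/- Soundness of the NoContinue rule: for all statements c, c' and assertions P, I, Q, Qb, Qc, Qr, if P ⊨ I and ⊨ {I} c ; c' {I, Q, λ σ. False, Qr} holds (normal postcondition I, break postcondition Q, continue postcondition False, return postcondition Qr), then ⊨ {P} loop c c' {Q, Qb, Qc, Qr} holds. -/
private lemma loop_not_brk_con {Var : Type} [DecidableEq Var] :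
    ∀ (s : Stmt Var) σ o σ', BigStep s σ o σ' → ∀ c1 c2, s = Stmt.loop c1 c2 →
      o ≠ .brk ∧ o ≠ .con := by
  intro s σ o σ' hb
  induction hb <;> intro d1 d2 hs <;> simp_all

private lemma nocontinue_aux {Var : Type} [DecidableEq Var] {c c' : Stmt Var}
    {I Q Qr : Assn Var}
    (h : Valid I (Stmt.seq c c') I Q (fun _ => False) Qr) :
    ∀ s σ o σ', BigStep s σ o σ' → s = Stmt.loop c c' → I σ →
      (o = .normal → Q σ') ∧ (o = .ret → Qr σ') := by
  intro s σ o σ' hb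
  induction hb with
  | loop_brk h1 _ =>
    rintro ⟨rfl, rfl⟩ hI
    have := h _ _ _ hI (.seq_abort h1 (by simp))
    exact ⟨fun _ => this.2.1 rfl, by simp⟩
  | loop_ret h1 _ =>
    rintro ⟨rfl, rfl⟩ hI
    have := h _ _ _ hI (.seq_abort h1 (by simp))
    exact ⟨by simp, fun _ => this.2.2.2 rfl⟩
  | loop_incr_brk_of_normal h1 h2 _ _ =>
    rintro ⟨rfl, rfl⟩ hI
    have := h _ _ _ hI (.seq_normal h1 h2)
    exact ⟨fun _ => this.2.1 rfl, by simp⟩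
  | loop_incr_brk_of_con h1 _ _ _ =>
    rintro ⟨rfl, rfl⟩ hI
    exact absurd ((h _ _ _ hI (.seq_abort h1 (by simp))).2.2.1 rfl) id
  | loop_incr_ret_of_normal h1 h2 _ _ =>
    rintro ⟨rfl, rfl⟩ hI
    have := h _ _ _ hI (.seq_normal h1 h2)
    exact ⟨by simp, fun _ => this.2.2.2 rfl⟩
  | loop_incr_ret_of_con h1 _ _ _ =>
    rintro ⟨rfl, rfl⟩ hI
    exact absurd ((h _ _ _ hI (.seq_abort h1 (by simp))).2.2.1 rfl) id
  | loop_step_of_normal h1 h2 _ _ _ ih =>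
    rintro ⟨rfl, rfl⟩ hI
    have hI' := (h _ _ _ hI (.seq_normal h1 h2)).1 rfl
    exact ih rfl hI'
  | loop_step_of_con h1 _ _ _ _ _ =>
    rintro ⟨rfl, rfl⟩ hI
    exact absurd ((h _ _ _ hI (.seq_abort h1 (by simp))).2.2.1 rfl) id
  | _ => rintro ⟨⟩ <;> simp_all

/-- Soundness of the NoContinue rule. -/
theorem nocontinue_sound {Var : Type} [DecidableEq Var] (c c' : Stmt Var)
    (P I Q Qb Qc Qr : Assn Var)
    (hPI : Entails P I)
    (h : Valid I (Stmt.seq c c') I Q (fun _ => False) Qr) :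
    Valid P (Stmt.loop c c') Q Qb Qc Qr := by
  intro σ o σ' hP hb
  have := nocontinue_aux h _ _ _ _ hb rfl (hPI σ hP)
  refine ⟨this.1, ?_, ?_, this.2⟩ <;> rintro rfl
  · exact absurd rfl (loop_not_brk_con _ _ _ _ hb _ _ rfl).1
  · exact absurd rfl (loop_not_brk_con _ _ _ _ hb _ _ rfl).2
end

section
/- Soundness of the loop-folding transformation for continue-free bodies: for all statements c, c' such that c is continue-free, and all assertions P, Q, Qb, Qc, Qr, if the Hoare quadruple ⊨ {P} loop (c ; c') skip {Q, Qb, Qc, Qr} holds, then ⊨ {P} loop c c' {Q, Qb, Qc, Qr} holds. -/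
/-- A statement is continue-free if no `continue` occurs in it outside the bodies
of loop statements nested within it. -/
def continueFree {Var : Type} : Stmt Var → Prop
  | .skip => True
  | .assign _ _ => True
  | .seq c1 c2 => continueFree c1 ∧ continueFree c2
  | .break_ => True
  | .continue_ => False
  | .return_ => True
  | .ifte _ c1 c2 => continueFree c1 ∧ continueFree c2
  | .loop _ _ => True

lemma noCon {Var : Type} [DecidableEq Var] {c : Stmt Var} {σ o σ'}
    (h : BigStep c σ o σ') (hcf : continueFree c) : o ≠ .con := by
  induction h with
  | skip => simp
  | assign => simp
  | seq_normal h1 h2 ih1 ih2 => exact ih2 hcf.2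
  | seq_abort h1 hne ih => exact ih hcf.1
  | break_ => simp
  | continue_ => exact absurd hcf id
  | return_ => simp
  | if_true _ _ ih => exact ih hcf.1
  | if_false _ _ ih => exact ih hcf.2
  | loop_brk => simp
  | loop_ret => simp
  | loop_incr_brk_of_normal => simp
  | loop_incr_brk_of_con => simp
  | loop_incr_ret_of_normal => simp
  | loop_incr_ret_of_con => simp
  | loop_step_of_normal _ _ _ _ _ ih => exact ih trivial
  | loop_step_of_con _ _ _ _ _ ih => exact ih trivial

lemma fold_step {Var : Type} [DecidableEq Var] {c c' : Stmt Var}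
    (hcf : continueFree c) {s : Stmt Var} {σ o σ'}
    (h : BigStep s σ o σ') (hs : s = Stmt.loop c c') :
    BigStep (Stmt.loop (Stmt.seq c c') Stmt.skip) σ o σ' := by
  induction h with
  | loop_brk h1 =>
    cases hs
    exact .loop_brk (.seq_abort h1 (by simp))
  | loop_ret h1 =>
    cases hs
    exact .loop_ret (.seq_abort h1 (by simp))
  | loop_incr_brk_of_normal h1 h2 =>
    cases hs
    exact .loop_brk (.seq_normal h1 h2)
  | loop_incr_brk_of_con h1 h2 =>
    cases hs
    exact absurd rfl (noCon h1 hcf)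
  | loop_incr_ret_of_normal h1 h2 =>
    cases hs
    exact .loop_ret (.seq_normal h1 h2)
  | loop_incr_ret_of_con h1 h2 =>
    cases hs
    exact absurd rfl (noCon h1 hcf)
  | loop_step_of_normal h1 h2 h3 _ _ ih =>
    cases hs
    exact .loop_step_of_normal (.seq_normal h1 h2) .skip (ih rfl)
  | loop_step_of_con h1 h2 h3 _ _ ih =>
    cases hs
    exact absurd rfl (noCon h1 hcf)
  | _ => simp_all

/-- Soundness of the loop-folding transformation for continue-free bodies. -/
theorem loop_fold_sound {Var : Type} [DecidableEq Var] (c c' : Stmt Var)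
    (hcf : continueFree c) (P Q Qb Qc Qr : Assn Var)
    (h : Valid P (Stmt.loop (Stmt.seq c c') Stmt.skip) Q Qb Qc Qr) :
    Valid P (Stmt.loop c c') Q Qb Qc Qr := fun σ o σ' hP hb => h σ o σ' hP (fold_step hcf hb rfl)
end
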